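/- arXiv:1110.3100 — 3 statements merged into one kernel-verified Lean document; each statement's English description precedes it below -/
import Mathlib

section
/- Let {x_i} and {y_i} be sequences of mutually independent Bernoulli random variables with E[Σ x_i] = α and E[Σ y_i] = β, where α < β. Then P(Σ x_i > Σ y_i) < 2·exp(−(α−β)²/(8(α+β))). -/
open MeasureTheory ProbabilityTheory Finset Real

/-!
If `Σ y_i < Σ x_i`, then `Σ x_i` lies above or `Σ y_i` below the midpoint `(α + β) / 2`, and each
of these events is controlled by a Chernoff bound. A `{0, 1}`-valued `X` has
`exp (t X) = 1 + (exp t - 1) X`, so by `1 + z ≤ exp z` and independence the mgf of a sum of such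
variables with mean `a` is at most `exp ((exp t - 1) a)`. With `t = (β - α) / (2 (α + β)) ≤ 1` and
`exp t - 1 - t ≤ t ^ 2` the upper tail of `Σ x_i` is strictly below
`exp (-(α - β) ^ 2 / (8 (α + β)))`; with `t = -(β - α) / (2 β)` and
`exp (-u) ≤ 1 - u + u ^ 2 / 2` the lower tail of `Σ y_i` is at most that.
-/

-- `(1 + u + u ^ 2 / 2) (1 - u + u ^ 2 / 2) = 1 + u ^ 4 / 4`
lemma Real.exp_neg_le_one_sub_add_sq_div_two {u : ℝ} (hu : 0 ≤ u) :
    exp (-u) ≤ 1 - u + u ^ 2 / 2 := by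
  have hquad := quadratic_le_exp_of_nonneg hu
  rw [exp_neg, inv_le_iff_one_le_mul₀ (exp_pos u)]
  nlinarith [mul_le_mul_of_nonneg_left hquad (by nlinarith : (0 : ℝ) ≤ 1 - u + u ^ 2 / 2)]

namespace ProbabilityTheory

lemma exp_mul_eq_of_zero_or_one {Ω : Type*} {X : Ω → ℝ} (hX : ∀ ω, X ω = 0 ∨ X ω = 1) (t : ℝ)
    (ω : Ω) : exp (t * X ω) = 1 + (exp t - 1) * X ω := by
  rcases hX ω with h | h <;> simp [h]

variable {Ω : Type*} [MeasurableSpace Ω] {μ : Measure Ω}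

section ZeroOne

variable {X : Ω → ℝ}

lemma integrable_of_zero_or_one [IsFiniteMeasure μ] (hXm : Measurable X)
    (hX : ∀ ω, X ω = 0 ∨ X ω = 1) : Integrable X μ :=
  .of_bound hXm.aestronglyMeasurable 1 <| ae_of_all _ fun ω => by
    rcases hX ω with h | h <;> simp [h]

lemma integrable_exp_mul_of_zero_or_one [IsFiniteMeasure μ] (hXm : Measurable X)
    (hX : ∀ ω, X ω = 0 ∨ X ω = 1) (t : ℝ) : Integrable (fun ω => exp (t * X ω)) μ := by
  simp_rw [exp_mul_eq_of_zero_or_one hX t]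
  exact (integrable_const 1).add ((integrable_of_zero_or_one hXm hX).const_mul _)

lemma mgf_eq_of_zero_or_one [IsProbabilityMeasure μ] (hXm : Measurable X)
    (hX : ∀ ω, X ω = 0 ∨ X ω = 1) (t : ℝ) : mgf X μ t = 1 + (exp t - 1) * μ[X] := by
  simp_rw [mgf, exp_mul_eq_of_zero_or_one hX t]
  rw [integral_add (integrable_const 1) ((integrable_of_zero_or_one hXm hX).const_mul _),
    integral_const, integral_const_mul]
  simp

lemma mgf_le_exp_of_zero_or_one [IsProbabilityMeasure μ] (hXm : Measurable X)
    (hX : ∀ ω, X ω = 0 ∨ X ω = 1) (t : ℝ) : mgf X μ t ≤ exp ((exp t - 1) * μ[X]) := by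
  rw [mgf_eq_of_zero_or_one hXm hX, add_comm]
  exact add_one_le_exp _

end ZeroOne

section SumZeroOne

variable {ι : Type*} [Fintype ι] {X : ι → Ω → ℝ}

lemma integral_sum_nonneg_of_zero_or_one (hX : ∀ i ω, X i ω = 0 ∨ X i ω = 1) :
    0 ≤ ∫ ω, ∑ i, X i ω ∂μ :=
  integral_nonneg fun ω => sum_nonneg fun i _ => by rcases hX i ω with h | h <;> simp [h]

variable [IsProbabilityMeasure μ]

lemma iIndepFun.mgf_sum_le_of_zero_or_one (hind : iIndepFun X μ) (hXm : ∀ i, Measurable (X i))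
    (hX : ∀ i ω, X i ω = 0 ∨ X i ω = 1) (t : ℝ) :
    mgf (∑ i, X i) μ t ≤ exp ((exp t - 1) * ∫ ω, ∑ i, X i ω ∂μ) := by
  have hint i := integrable_of_zero_or_one (μ := μ) (hXm i) (hX i)
  calc mgf (∑ i, X i) μ t = ∏ i, mgf (X i) μ t := hind.mgf_sum hXm univ
    _ ≤ ∏ i, exp ((exp t - 1) * μ[X i]) :=
      prod_le_prod (fun i _ => mgf_nonneg) fun i _ => mgf_le_exp_of_zero_or_one (hXm i) (hX i) t
    _ = exp ((exp t - 1) * ∫ ω, ∑ i, X i ω ∂μ) := by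
      rw [← exp_sum, ← mul_sum, integral_finsetSum _ fun i _ => hint i]

lemma iIndepFun.integrable_exp_mul_sum_of_zero_or_one (hind : iIndepFun X μ)
    (hXm : ∀ i, Measurable (X i)) (hX : ∀ i ω, X i ω = 0 ∨ X i ω = 1) (t : ℝ) :
    Integrable (fun ω => exp (t * (∑ i, X i) ω)) μ :=
  hind.integrable_exp_mul_sum hXm fun i _ => integrable_exp_mul_of_zero_or_one (hXm i) (hX i) t

lemma iIndepFun.measureReal_sum_ge_le_of_zero_or_one (hind : iIndepFun X μ)
    (hXm : ∀ i, Measurable (X i)) (hX : ∀ i ω, X i ω = 0 ∨ X i ω = 1) (c : ℝ) {t : ℝ}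
    (ht : 0 ≤ t) :
    μ.real {ω | c ≤ ∑ i, X i ω} ≤ exp ((exp t - 1) * (∫ ω, ∑ i, X i ω ∂μ) - t * c) := by
  have hchernoff :=
    measure_ge_le_exp_mul_mgf c ht (hind.integrable_exp_mul_sum_of_zero_or_one hXm hX t)
  simp only [Finset.sum_apply] at hchernoff
  refine hchernoff.trans ?_
  rw [sub_eq_add_neg, exp_add, mul_comm, neg_mul]
  gcongr
  exact hind.mgf_sum_le_of_zero_or_one hXm hX t

lemma iIndepFun.measureReal_sum_le_le_of_zero_or_one (hind : iIndepFun X μ)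
    (hXm : ∀ i, Measurable (X i)) (hX : ∀ i ω, X i ω = 0 ∨ X i ω = 1) (c : ℝ) {t : ℝ}
    (ht : t ≤ 0) :
    μ.real {ω | ∑ i, X i ω ≤ c} ≤ exp ((exp t - 1) * (∫ ω, ∑ i, X i ω ∂μ) - t * c) := by
  have hchernoff :=
    measure_le_le_exp_mul_mgf c ht (hind.integrable_exp_mul_sum_of_zero_or_one hXm hX t)
  simp only [Finset.sum_apply] at hchernoff
  refine hchernoff.trans ?_
  rw [sub_eq_add_neg, exp_add, mul_comm, neg_mul]
  gcongr
  exact hind.mgf_sum_le_of_zero_or_one hXm hX t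

variable {α β : ℝ}

lemma iIndepFun.measureReal_sum_ge_midpoint_lt (hind : iIndepFun X μ)
    (hXm : ∀ i, Measurable (X i)) (hX : ∀ i ω, X i ω = 0 ∨ X i ω = 1)
    (hEX : ∫ ω, ∑ i, X i ω ∂μ = α) (hαβ : α < β) :
    μ.real {ω | (α + β) / 2 ≤ ∑ i, X i ω} < exp (-(α - β) ^ 2 / (8 * (α + β))) := by
  have hα : 0 ≤ α := hEX ▸ integral_sum_nonneg_of_zero_or_one hX
  set t := (β - α) / (2 * (α + β)) with ht
  have ht0 : 0 ≤ t := div_nonneg (by linarith) (by linarith)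
  have ht1 : t ≤ 1 := by rw [ht, div_le_one (by linarith)]; linarith
  have hexp : exp t - 1 - t ≤ t ^ 2 :=
    (le_abs_self _).trans (abs_exp_sub_one_sub_id_le (abs_le.2 ⟨by linarith, ht1⟩))
  refine (hind.measureReal_sum_ge_le_of_zero_or_one hXm hX _ ht0).trans_lt ?_
  rw [hEX, exp_lt_exp]
  have hS : 0 < α + β := by linarith
  calc (exp t - 1) * α - t * ((α + β) / 2) ≤ (t + t ^ 2) * α - t * ((α + β) / 2) := by
        gcongr; linarith
    _ = -(α - β) ^ 2 * β / (4 * (α + β) ^ 2) := by rw [ht]; field_simp; ring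
    _ < -(α - β) ^ 2 / (8 * (α + β)) := by
        rw [div_lt_div_iff₀ (by positivity) (by positivity)]
        nlinarith [mul_pos (mul_pos (sq_pos_of_pos (sub_pos.2 hαβ)) hS) (sub_pos.2 hαβ)]

lemma iIndepFun.measureReal_sum_le_midpoint_le (hind : iIndepFun X μ)
    (hXm : ∀ i, Measurable (X i)) (hX : ∀ i ω, X i ω = 0 ∨ X i ω = 1)
    (hEX : ∫ ω, ∑ i, X i ω ∂μ = β) (hα : 0 ≤ α) (hαβ : α < β) :
    μ.real {ω | ∑ i, X i ω ≤ (α + β) / 2} ≤ exp (-(α - β) ^ 2 / (8 * (α + β))) := by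
  set u := (β - α) / (2 * β) with hu
  have hu0 : 0 ≤ u := div_nonneg (by linarith) (by linarith)
  have hexp := exp_neg_le_one_sub_add_sq_div_two hu0
  refine (hind.measureReal_sum_le_le_of_zero_or_one hXm hX _ (neg_nonpos.2 hu0)).trans ?_
  rw [hEX, exp_le_exp]
  have hβ : 0 < β := by linarith
  calc (exp (-u) - 1) * β - -u * ((α + β) / 2)
        ≤ (-u + u ^ 2 / 2) * β - -u * ((α + β) / 2) := by gcongr; linarith
    _ = -(α - β) ^ 2 / (8 * β) := by rw [hu]; field_simp; ring
    _ ≤ -(α - β) ^ 2 / (8 * (α + β)) := by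
        rw [neg_div, neg_div, neg_le_neg_iff]
        gcongr; linarith

end SumZeroOne

end ProbabilityTheory

/-- If `{x_i}` and `{y_i}` are mutually independent Bernoulli random
variables with `E[Σ x_i] = α`, `E[Σ y_i] = β`, `α < β`, then
`P(Σ x_i > Σ y_i) < 2 exp(-(α-β)^2 / (8(α+β)))`. -/
theorem bernoulli_sum_tail
    {Ω : Type*} [MeasurableSpace Ω] (μ : Measure Ω) [IsProbabilityMeasure μ]
    (N : ℕ) (x y : Fin N → Ω → ℝ) (α β : ℝ)
    (hmx : ∀ i, Measurable (x i)) (hmy : ∀ i, Measurable (y i))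
    (hx01 : ∀ i ω, x i ω = 0 ∨ x i ω = 1)
    (hy01 : ∀ i ω, y i ω = 0 ∨ y i ω = 1)
    (hindep : iIndepFun
      (Sum.elim x y) μ)
    (hEx : ∫ ω, (∑ i, x i ω) ∂μ = α)
    (hEy : ∫ ω, (∑ i, y i ω) ∂μ = β)
    (hαβ : α < β) :
    μ {ω | ∑ i, y i ω < ∑ i, x i ω}
      < ENNReal.ofReal (2 * Real.exp (-(α - β) ^ 2 / (8 * (α + β)))) := by
  have hα : 0 ≤ α := hEx ▸ integral_sum_nonneg_of_zero_or_one hx01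
  have hx : iIndepFun x μ := hindep.precomp (g := Sum.inl) Sum.inl_injective
  have hy : iIndepFun y μ := hindep.precomp (g := Sum.inr) Sum.inr_injective
  have hupper := hx.measureReal_sum_ge_midpoint_lt hmx hx01 hEx hαβ
  have hlower := hy.measureReal_sum_le_midpoint_le hmy hy01 hEy hα hαβ
  have hsplit : {ω | ∑ i, y i ω < ∑ i, x i ω} ⊆
      {ω | (α + β) / 2 ≤ ∑ i, x i ω} ∪ {ω | ∑ i, y i ω ≤ (α + β) / 2} :=
    fun ω (h : ∑ i, y i ω < ∑ i, x i ω) =>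
      (le_or_gt ((α + β) / 2) (∑ i, x i ω)).imp id fun hlt => (h.trans hlt).le
  rw [ENNReal.lt_ofReal_iff_toReal_lt (measure_ne_top μ _), ← measureReal_def]
  calc _ ≤ _ := (measureReal_mono hsplit).trans (measureReal_union_le _ _)
    _ < _ := by linarith
end

section
/- For integers n ≥ s' with each individual count i_j ≤ ln s and Σ_j i_j = s', the product ∏_j s!/((s − i_j)!) satisfies (s − ln s)^{s'} ≤ ∏_j s!/(s − i_j)! ≤ s^{s'}, and moreover s^{s'}(1 − ln s/s)^{s'} ≥ s'^{s'} e^{s−s'}/(2s) when s' ∈ [s − √s, s + √s] and s is sufficiently large. -/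
/-!
Writing `s!/(s-i)! = s(s-1)⋯(s-i+1)`, each factor lies between `s - ln s` and `s` when
`i ≤ ln s`, which gives the two-sided bound on the product.

For the asymptotic bound put `t = s'`, `A = s - ln s` and `d = A - t`, so that
`|d| ≤ √s + ln s = O(√s)`. Taking logarithms, the claim is
`t ln t + (s - t) - ln (2s) ≤ t ln A`; by the second-order Taylor bound
`ln (1 + x) ≥ x - 13x²/25` at `x = d/t` we get `t ln A ≥ t ln t + d - 13d²/(25t)`, and
`d = s - t - ln s` while `13d²/(25t) ≈ 13/25 < ln 2`.
-/

open Finset Filter Real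

theorem Nat.cast_factorial_div_factorial_sub {n k : ℕ} (h : k ≤ n) :
    ((n.factorial : ℝ) / ((n - k).factorial : ℝ)) = n.descFactorial k := by
  rw [← Nat.factorial_mul_descFactorial h, Nat.cast_mul,
    mul_div_cancel_left₀ _ (by positivity)]

theorem Nat.sub_pow_le_descFactorial {n k : ℕ} {a : ℝ} (hk : (k : ℝ) ≤ a + 1)
    (ha : a ≤ n) : ((n : ℝ) - a) ^ k ≤ n.descFactorial k := by
  have hbase : (n : ℝ) - a ≤ ((n + 1 - k : ℕ) : ℝ) := by
    have hkn : (k : ℝ) ≤ (n + 1 : ℕ) := by push_cast; linarith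
    have : ((n + 1 - k : ℕ) : ℝ) = n + 1 - k := by
      rw [Nat.cast_sub (by exact_mod_cast hkn), Nat.cast_succ]
    linarith
  calc ((n : ℝ) - a) ^ k ≤ ((n + 1 - k : ℕ) : ℝ) ^ k := pow_le_pow_left₀ (by linarith) hbase k
    _ ≤ n.descFactorial k := by exact_mod_cast Nat.pow_sub_le_descFactorial n k

theorem Finset.sub_pow_sum_le_prod_descFactorial {ι : Type*} (s : Finset ι) (i : ι → ℕ)
    {n : ℕ} {a : ℝ} (hi : ∀ j ∈ s, (i j : ℝ) ≤ a + 1) (ha : a ≤ n) :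
    ((n : ℝ) - a) ^ (∑ j ∈ s, i j) ≤ ∏ j ∈ s, (n.descFactorial (i j) : ℝ) := by
  rw [← prod_pow_eq_pow_sum]
  exact prod_le_prod (fun _ _ => pow_nonneg (by linarith) _)
    fun j hj => Nat.sub_pow_le_descFactorial (hi j hj) ha

theorem Finset.prod_descFactorial_le_pow_sum {ι : Type*} (s : Finset ι) (i : ι → ℕ) (n : ℕ) :
    ∏ j ∈ s, (n.descFactorial (i j) : ℝ) ≤ (n : ℝ) ^ (∑ j ∈ s, i j) := by
  rw [← prod_pow_eq_pow_sum]
  exact prod_le_prod (fun _ _ => by positivity)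
    fun j _ => by exact_mod_cast Nat.descFactorial_le_pow n (i j)

theorem Real.sub_mul_sq_le_log_one_add {x : ℝ} (hx : |x| ≤ 1 / 100) :
    x - 13 / 25 * x ^ 2 ≤ log (1 + x) := by
  have htaylor :=
    (abs_le.1 (abs_log_sub_add_sum_range_le (x := -x) (by rw [abs_neg]; linarith) 2)).1
  norm_num [sum_range_succ] at htaylor
  have hcube : |x| ^ 3 / (1 - |x|) ≤ x ^ 2 / 50 := by
    rw [div_le_iff₀ (by linarith), pow_succ, sq_abs]
    nlinarith [mul_nonneg (sq_nonneg x) (sub_nonneg.2 hx)]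
  linarith

theorem Real.mul_log_add_sub_le_mul_log {t A : ℝ} (ht : 0 < t) (hd : |A - t| ≤ t / 100) :
    t * log t + (A - t) - 13 / 25 * (A - t) ^ 2 / t ≤ t * log A := by
  set x := (A - t) / t with hx
  have hxabs : |x| ≤ 1 / 100 := by
    rw [hx, abs_div, abs_of_pos ht, div_le_iff₀ ht]; linarith
  have hA : A = t * (1 + x) := by rw [hx]; field_simp; ring
  have h1x : 0 < 1 + x := by linarith [neg_abs_le x]
  have hlog := mul_le_mul_of_nonneg_left (sub_mul_sq_le_log_one_add hxabs) ht.le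
  rw [hA, log_mul ht.ne' h1x.ne']
  have : t * (x - 13 / 25 * x ^ 2) = t * (1 + x) - t - 13 / 25 * (t * (1 + x) - t) ^ 2 / t := by
    rw [hx]; field_simp; ring
  linarith

theorem Real.mul_log_add_sub_sub_le_mul_log_sq_sub {r t L : ℝ} (hr : 200 ≤ r) (hL0 : 0 ≤ L)
    (hL : L ≤ r / 25) (ht : |t - r ^ 2| ≤ r) :
    t * log t + (r ^ 2 - t) - (log 2 + L) ≤ t * log (r ^ 2 - L) := by
  obtain ⟨htl, htu⟩ := abs_le.1 ht
  have htpos : 199 / 200 * r ^ 2 ≤ t := by nlinarith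
  have hd : |r ^ 2 - L - t| ≤ 26 / 25 * r := by rw [abs_le]; constructor <;> linarith
  have hkey := mul_log_add_sub_le_mul_log (A := r ^ 2 - L) (by nlinarith)
    (hd.trans (by nlinarith))
  have hsq : 13 / 25 * (r ^ 2 - L - t) ^ 2 / t ≤ log 2 := by
    have hd2 : (r ^ 2 - L - t) ^ 2 ≤ (26 / 25 * r) ^ 2 := by
      rw [← sq_abs]; exact pow_le_pow_left₀ (abs_nonneg _) hd 2
    rw [div_le_iff₀ (by nlinarith)]
    nlinarith [log_two_gt_d9]
  linarith

theorem eventually_log_le_sqrt_div_and_le_sqrt :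
    ∀ᶠ s : ℕ in atTop, log s ≤ √s / 25 ∧ 200 ≤ √(s : ℝ) := by
  have hlog : ∀ᶠ x : ℝ in atTop, log x ≤ √x / 25 := by
    filter_upwards [(isLittleO_log_rpow_atTop (r := 1 / 2) (by norm_num)).bound
      (c := 1 / 25) (by norm_num), eventually_ge_atTop 0] with x hx hx0
    rw [Real.norm_eq_abs, Real.norm_of_nonneg (rpow_nonneg hx0 _), ← sqrt_eq_rpow] at hx
    linarith [le_abs_self (log x)]
  exact tendsto_natCast_atTop_atTop.eventually
    (hlog.and (tendsto_sqrt_atTop.eventually_ge_atTop 200))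

/-- For nonnegative integers `i_1,...,i_n` with each `i_j ≤ ln s` and
`Σ i_j = s'` (with `n ≥ s'`), `(s - ln s)^{s'} ≤ ∏_j s!/(s - i_j)! ≤ s^{s'}`; moreover,
for `s` sufficiently large and `s' ∈ [s - √s, s + √s]`,
`s^{s'} (1 - ln s / s)^{s'} ≥ s'^{s'} e^{s - s'} / (2s)`. -/
theorem falling_factorial_product_bounds :
    (∀ (s n s' : ℕ) (i : Fin n → ℕ),
      s' ≤ n →
      (∀ j, (i j : ℝ) ≤ Real.log s) →
      (∑ j, i j) = s' →
      ((s : ℝ) - Real.log s) ^ s' ≤ ∏ j, ((s.factorial : ℝ) / ((s - i j).factorial : ℝ))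
        ∧ ∏ j, ((s.factorial : ℝ) / ((s - i j).factorial : ℝ)) ≤ (s : ℝ) ^ s')
    ∧ ∃ s₀ : ℕ, ∀ s : ℕ, s₀ ≤ s → ∀ s' : ℕ,
        (s : ℝ) - Real.sqrt s ≤ (s' : ℝ) → (s' : ℝ) ≤ (s : ℝ) + Real.sqrt s →
        (s' : ℝ) ^ s' * Real.exp ((s : ℝ) - (s' : ℝ)) / (2 * s)
          ≤ (s : ℝ) ^ s' * (1 - Real.log s / s) ^ s' := by
  refine ⟨fun s n s' i _ hi hsum => ?_, ?_⟩
  · have hlog : log s ≤ s := log_le_self s.cast_nonneg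
    have hdesc : ∏ j, ((s.factorial : ℝ) / ((s - i j).factorial : ℝ))
        = ∏ j, (s.descFactorial (i j) : ℝ) :=
      prod_congr rfl fun j _ =>
        Nat.cast_factorial_div_factorial_sub (by exact_mod_cast (hi j).trans hlog)
    rw [hdesc, ← hsum]
    exact ⟨sub_pow_sum_le_prod_descFactorial _ _ (fun j _ => by linarith [hi j]) hlog,
      prod_descFactorial_le_pow_sum _ _ _⟩
  · obtain ⟨s₀, hs₀⟩ := eventually_atTop.1 eventually_log_le_sqrt_div_and_le_sqrt
    refine ⟨s₀, fun s hss₀ s' h1 h2 => ?_⟩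
    obtain ⟨hL, hr⟩ := hs₀ s hss₀
    set r := √(s : ℝ)
    have hsr : (s : ℝ) = r ^ 2 := (sq_sqrt s.cast_nonneg).symm
    have hs_pos : (0 : ℝ) < s := by rw [hsr]; positivity
    have ht : (0 : ℝ) < s' := by nlinarith
    have hA : (0 : ℝ) < s - log s := by nlinarith
    rw [← mul_pow, mul_one_sub, mul_div_cancel₀ _ hs_pos.ne',
      ← log_le_log_iff (by positivity) (by positivity), log_div (by positivity) (by positivity),
      log_mul (by positivity) (by positivity), log_exp, log_mul two_ne_zero hs_pos.ne',
      log_pow, log_pow]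
    have hL0 := log_natCast_nonneg s
    rw [hsr] at h1 h2 hL hL0 ⊢
    exact mul_log_add_sub_sub_le_mul_log_sq_sub hr hL0 hL
      (abs_le.2 ⟨by linarith, by linarith⟩)
end

section
/- Let P and Q be weakly disjoint distributions and suppose the number of samples satisfies s ≤ 0.25/‖P−Q‖₃, where ‖P−Q‖₃ = (Σ_i |p_i − q_i|³)^{1/3}. For each element x in the disjoint part, call x 'helpful' if it is sampled at least 3 times in total across the 2s training samples and s testing samples. Then the probability that at least one helpful element exists is at most 1/20. -/
/-!
An element `i` of the disjoint part has `p i = 0` or `q i = 0`, so it is never drawn in one of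
the three blocks of `s` samples, and in each of the other `2 s` draws it has probability at most
`|p i - q i|`. By independence and a union bound over triples of draws, `i` is drawn at least three
times with probability at most `C(2s, 3) |p i - q i|³ ≤ (4/3) s³ |p i - q i|³`. Summing over `i`
gives at most `(4/3) s³ ‖P - Q‖₃³ ≤ (4/3) / 64 < 1/20`.
-/

open MeasureTheory ProbabilityTheory Finset
open scoped ENNReal

section IndependentCounts

variable {Ω ι α : Type*} [Fintype ι] [DecidableEq ι] [DecidableEq α]

lemma setOf_le_card_filter_eq_subset (Z : ι → Ω → α) (a : α) (K : Finset ι) (m : ℕ) :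
    {ω | m ≤ #{k | Z k ω = a}} ⊆
      (⋃ k ∈ Kᶜ, {ω | Z k ω = a}) ∪ ⋃ T ∈ K.powersetCard m, ⋂ k ∈ T, {ω | Z k ω = a} := by
  intro ω hω
  by_cases hK : ({k | Z k ω = a} : Finset ι) ⊆ K
  · obtain ⟨T, hT, hTcard⟩ := exists_subset_card_eq hω
    refine Or.inr (Set.mem_iUnion₂.mpr ⟨T, mem_powersetCard.mpr ⟨hT.trans hK, hTcard⟩, ?_⟩)
    exact Set.mem_iInter₂.mpr fun k hk => (mem_filter.mp (hT hk)).2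
  · obtain ⟨k, hk, hkK⟩ := not_subset.mp hK
    exact Or.inl (Set.mem_iUnion₂.mpr ⟨k, mem_compl.mpr hkK, (mem_filter.mp hk).2⟩)

lemma measure_le_card_filter_eq_le [MeasurableSpace Ω] [MeasurableSpace α] [MeasurableSingletonClass α]
    {μ : Measure Ω} {Z : ι → Ω → α} (hZ : iIndepFun Z μ) (a : α) (K : Finset ι) (r : ℝ≥0∞)
    (m : ℕ) (hK : ∀ k ∈ K, μ {ω | Z k ω = a} ≤ r) (hKc : ∀ k ∉ K, μ {ω | Z k ω = a} = 0) :
    μ {ω | m ≤ #{k | Z k ω = a}} ≤ (#K).choose m * r ^ m := by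
  have hnull : μ (⋃ k ∈ Kᶜ, {ω | Z k ω = a}) = 0 :=
    (measure_biUnion_null_iff (Kᶜ : Finset ι).countable_toSet).mpr fun k hk =>
      hKc k (mem_compl.mp hk)
  have hinter (T : Finset ι) :
      μ (⋂ k ∈ T, {ω | Z k ω = a}) = ∏ k ∈ T, μ {ω | Z k ω = a} :=
    hZ.measure_inter_preimage_eq_mul T (sets := fun _ => {a}) fun _ _ => measurableSet_singleton a
  calc μ {ω | m ≤ #{k | Z k ω = a}}
      ≤ μ (⋃ k ∈ Kᶜ, {ω | Z k ω = a}) +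
          μ (⋃ T ∈ K.powersetCard m, ⋂ k ∈ T, {ω | Z k ω = a}) :=
        (measure_mono (setOf_le_card_filter_eq_subset Z a K m)).trans (measure_union_le _ _)
    _ ≤ ∑ T ∈ K.powersetCard m, μ (⋂ k ∈ T, {ω | Z k ω = a}) := by
        rw [hnull, zero_add]
        exact measure_biUnion_finset_le _ _
    _ ≤ ∑ _T ∈ K.powersetCard m, r ^ m := by
        refine sum_le_sum fun T hT => ?_
        obtain ⟨hTK, hTcard⟩ := mem_powersetCard.mp hT
        rw [hinter, ← hTcard]
        exact prod_le_pow_card T _ r fun k hk => hK k (hTK hk)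
    _ = (#K).choose m * r ^ m := by rw [sum_const, card_powersetCard, nsmul_eq_mul]

end IndependentCounts

lemma Fin.card_filter_le_val_lt {N a b : ℕ} (h : b ≤ N) :
    #{k : Fin N | a ≤ (k : ℕ) ∧ (k : ℕ) < b} = b - a := by
  rw [← Nat.card_Ico, ← card_map Fin.valEmbedding]
  congr 1
  ext x
  simp only [mem_map, mem_filter, mem_univ, true_and, Fin.valEmbedding_apply, mem_Ico]
  constructor
  · rintro ⟨k, hk, rfl⟩
    exact hk
  · intro hx
    exact ⟨⟨x, by omega⟩, hx, rfl⟩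

section Sampling

variable {α : Type*} {s : ℕ} {p q t : α → ℝ} {i : α}

def sampleProb (s : ℕ) (p q t : α → ℝ) (k : ℕ) (i : α) : ℝ :=
  if k < s then p i else if k < 2 * s then q i else t i

lemma sampleProb_le_abs_sub (hp : 0 ≤ p i) (hq : 0 ≤ q i) (hpq : p i = 0 ∨ q i = 0)
    (ht : t i = p i ∨ t i = q i) (k : ℕ) : sampleProb s p q t k i ≤ |p i - q i| := by
  have hpq_le : p i ≤ |p i - q i| ∧ q i ≤ |p i - q i| := by
    rcases hpq with h | h <;> simp [h, abs_of_nonneg, hp, hq]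
  unfold sampleProb
  split_ifs
  · exact hpq_le.1
  · exact hpq_le.2
  · rcases ht with h | h <;> rw [h]
    exacts [hpq_le.1, hpq_le.2]

lemma exists_block_sampleProb_eq_zero (hpq : p i = 0 ∨ q i = 0) :
    ∃ a, a + s ≤ 3 * s ∧ ∀ k, a ≤ k → k < a + s → sampleProb s p q t k i = 0 := by
  rcases hpq with h | h
  · exact ⟨0, by omega, fun k _ hk => by simp [sampleProb, h, show k < s by omega]⟩
  · refine ⟨s, by omega, fun k hk hk' => ?_⟩
    simp [sampleProb, h, show ¬k < s by omega, show k < 2 * s by omega]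

lemma measure_three_le_card_filter_eq_le {Ω : Type*} [MeasurableSpace Ω] {μ : Measure Ω}
    [MeasurableSpace α] [MeasurableSingletonClass α] [DecidableEq α]
    {Z : Fin (3 * s) → Ω → α} (hZ : iIndepFun Z μ)
    (hdist : ∀ k i, μ {ω | Z k ω = i} = ENNReal.ofReal (sampleProb s p q t k i))
    (hp : 0 ≤ p i) (hq : 0 ≤ q i) (hpq : p i = 0 ∨ q i = 0) (ht : t i = p i ∨ t i = q i) :
    μ {ω | 3 ≤ #{k | Z k ω = i}} ≤ (2 * s).choose 3 * ENNReal.ofReal |p i - q i| ^ 3 := by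
  obtain ⟨a, has, hblock⟩ := exists_block_sampleProb_eq_zero (t := t) hpq
  let K : Finset (Fin (3 * s)) := {k | ¬(a ≤ (k : ℕ) ∧ (k : ℕ) < a + s)}
  have hK : #K = 2 * s := by
    have := card_filter_add_card_filter_not (s := univ) fun k : Fin (3 * s) =>
      a ≤ (k : ℕ) ∧ (k : ℕ) < a + s
    rw [Fin.card_filter_le_val_lt has, card_univ, Fintype.card_fin] at this
    change a + s - a + #K = 3 * s at this
    omega
  rw [← hK]
  refine measure_le_card_filter_eq_le hZ i K _ 3 (fun k _ => ?_) fun k hk => ?_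
  · rw [hdist]
    exact ENNReal.ofReal_le_ofReal (sampleProb_le_abs_sub hp hq hpq ht k)
  · simp only [K, mem_filter, mem_univ, true_and, not_not] at hk
    rw [hdist, hblock k hk.1 hk.2, ENNReal.ofReal_zero]

end Sampling

lemma pow_three_mul_le_of_le_div_rpow {x c A : ℝ} (hx : 0 ≤ x) (hc : 0 ≤ c) (hA : 0 ≤ A)
    (h : x ≤ c / A ^ ((1 : ℝ) / 3)) : x ^ 3 * A ≤ c ^ 3 := by
  rcases hA.eq_or_lt with rfl | hA
  · simpa using pow_nonneg hc 3
  have hxc : x * A ^ ((1 : ℝ) / 3) ≤ c := (le_div_iff₀ (Real.rpow_pos_of_pos hA _)).mp h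
  calc x ^ 3 * A = (x * A ^ ((1 : ℝ) / 3)) ^ 3 := by
        rw [mul_pow, ← Real.rpow_natCast (A ^ _), ← Real.rpow_mul hA.le]
        norm_num
    _ ≤ c ^ 3 := pow_le_pow_left₀ (by positivity) hxc 3

lemma choose_two_mul_three_mul_le {s : ℕ} {A : ℝ} (hA : 0 ≤ A)
    (hs : (s : ℝ) ≤ 0.25 / A ^ ((1 : ℝ) / 3)) : ((2 * s).choose 3 : ℝ) * A ≤ 1 / 20 := by
  have hcube := pow_three_mul_le_of_le_div_rpow (Nat.cast_nonneg s) (by norm_num) hA hs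
  have hchoose := Nat.choose_le_pow_div (α := ℝ) 3 (2 * s)
  norm_num [Nat.factorial] at hchoose
  nlinarith

theorem helpful_elements_unlikely_general
    {Ω : Type*} [MeasurableSpace Ω] (μ : Measure Ω)
    (n s : ℕ) (p q t : Fin n → ℝ) (Z : Fin (3 * s) → Ω → Fin n)
    (hp0 : ∀ i, 0 ≤ p i) (hq0 : ∀ i, 0 ≤ q i)
    (hweak : ∀ i, p i = q i ∨ (0 < p i ∧ q i = 0) ∨ (0 < q i ∧ p i = 0))
    (hT : t = p ∨ t = q)
    (hs : (s : ℝ) ≤ 0.25 / (∑ i, |p i - q i| ^ 3) ^ ((1 : ℝ) / 3))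
    (hindep : iIndepFun Z μ)
    (hdist : ∀ k i, μ {ω | Z k ω = i}
      = ENNReal.ofReal
          (if (k : ℕ) < s then p i else if (k : ℕ) < 2 * s then q i else t i)) :
    μ {ω | ∃ i : Fin n, p i ≠ q i
        ∧ 3 ≤ (Finset.univ.filter fun k => Z k ω = i).card}
      ≤ ENNReal.ofReal (1 / 20) := by
  have hhelpful (i : Fin n) : μ {ω | p i ≠ q i ∧ 3 ≤ #{k | Z k ω = i}} ≤
      (2 * s).choose 3 * ENNReal.ofReal (|p i - q i| ^ 3) := by
    by_cases hpq : p i = q i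
    · simp [hpq]
    have hzero : p i = 0 ∨ q i = 0 := by
      rcases hweak i with h | h | h
      exacts [absurd h hpq, Or.inr h.2, Or.inl h.2]
    rw [ENNReal.ofReal_pow (abs_nonneg _)]
    exact (measure_mono fun ω hω => hω.2).trans <|
      measure_three_le_card_filter_eq_le hindep hdist (hp0 i) (hq0 i) hzero
        (by rcases hT with rfl | rfl <;> simp)
  calc μ {ω | ∃ i, p i ≠ q i ∧ 3 ≤ #{k | Z k ω = i}}
      = μ (⋃ i, {ω | p i ≠ q i ∧ 3 ≤ #{k | Z k ω = i}}) := by rw [Set.ofPred_exists]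
    _ ≤ ∑ i, μ {ω | p i ≠ q i ∧ 3 ≤ #{k | Z k ω = i}} := measure_iUnion_fintype_le _ _
    _ ≤ ∑ i, ((2 * s).choose 3 : ℝ≥0∞) * ENNReal.ofReal (|p i - q i| ^ 3) :=
        sum_le_sum fun i _ => hhelpful i
    _ = ENNReal.ofReal ((2 * s).choose 3 * ∑ i, |p i - q i| ^ 3) := by
        rw [← mul_sum, ENNReal.ofReal_mul (Nat.cast_nonneg _), ENNReal.ofReal_natCast,
          ENNReal.ofReal_sum_of_nonneg fun i _ => by positivity]
    _ ≤ ENNReal.ofReal (1 / 20) :=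
        ENNReal.ofReal_le_ofReal (choose_two_mul_three_mul_le (by positivity) hs)

/-- For weakly disjoint distributions `P, Q` and
`s ≤ 0.25 / ‖P - Q‖₃`, sampling `s` training samples from each of `P` and `Q` and `s`
testing samples from `T ∈ {P, Q}` (all independent), the probability that some element
of the disjoint part is sampled at least 3 times in total is at most `1/20`. -/
theorem helpful_elements_unlikely
    {Ω : Type*} [MeasurableSpace Ω] (μ : Measure Ω) [IsProbabilityMeasure μ]
    (n s : ℕ) (p q t : Fin n → ℝ) (Z : Fin (3 * s) → Ω → Fin n)
    (hp0 : ∀ i, 0 ≤ p i) (hp1 : ∑ i, p i = 1)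
    (hq0 : ∀ i, 0 ≤ q i) (hq1 : ∑ i, q i = 1)
    (hweak : ∀ i, p i = q i ∨ (0 < p i ∧ q i = 0) ∨ (0 < q i ∧ p i = 0))
    (hT : t = p ∨ t = q)
    (hs : (s : ℝ) ≤ 0.25 / (∑ i, |p i - q i| ^ 3) ^ ((1 : ℝ) / 3))
    (hmeas : ∀ k, Measurable (Z k))
    (hindep : iIndepFun Z μ)
    (hdist : ∀ k i, μ {ω | Z k ω = i}
      = ENNReal.ofReal
          (if (k : ℕ) < s then p i else if (k : ℕ) < 2 * s then q i else t i)) :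
    μ {ω | ∃ i : Fin n, p i ≠ q i
        ∧ 3 ≤ (Finset.univ.filter fun k => Z k ω = i).card}
      ≤ ENNReal.ofReal (1 / 20) :=
  helpful_elements_unlikely_general μ n s p q t Z hp0 hq0 hweak hT hs hindep hdist
end
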